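/- Let G be a group, A a finite cyclic subgroup of the center of G, and let (H₁,N₁) and (H₂,N₂) be special pairs in G with H₁ ≤ H₂ and N₂ ≤ N₁. Set N₁' = N₁∩H₂ and N'_{1,2} = N₁'·N₂. Then N'_{1,2} is coisotropic in N₁, i.e. the centralizer of N'_{1,2} in N₁ equals the center of N'_{1,2}: Z_{N₁}(N'_{1,2}) = Z(N'_{1,2}). Moreover, Z(N'_{1,2}) = Z(N₁')·Z(N₂) = Z(N₁)·(N₂∩H₂). -/

import Mathlib

open scoped commutatorElement

section Aux

variable {G : Type*} [Group G]

/-- Product decomposition for the join of two elementwise-commuting subgroups. -/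
lemma aux_mem_sup_of_commute {S T : Subgroup G} (hc : ∀ s ∈ S, ∀ t ∈ T, Commute s t)
    {x : G} (hx : x ∈ S ⊔ T) : ∃ s ∈ S, ∃ t ∈ T, x = s * t := by
  let K : Subgroup G :=
    { carrier := {x | ∃ s ∈ S, ∃ t ∈ T, x = s * t}
      one_mem' := ⟨1, one_mem S, 1, one_mem T, (one_mul 1).symm⟩
      mul_mem' := by
        rintro a b ⟨s1, hs1, t1, ht1, rfl⟩ ⟨s2, hs2, t2, ht2, rfl⟩
        exact ⟨s1 * s2, mul_mem hs1 hs2, t1 * t2, mul_mem ht1 ht2,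
          ((hc s2 hs2 t1 ht1).symm.mul_mul_mul_comm s1 t2)⟩
      inv_mem' := by
        rintro a ⟨s, hs, t, ht, rfl⟩
        exact ⟨s⁻¹, inv_mem hs, t⁻¹, inv_mem ht, by
          rw [mul_inv_rev, ((hc s hs t ht).inv_inv).eq]⟩ }
  have hle : S ⊔ T ≤ K :=
    sup_le (fun s hs => ⟨s, hs, 1, one_mem T, (mul_one s).symm⟩)
      (fun t ht => ⟨1, one_mem S, t, ht, (one_mul t).symm⟩)
  exact hle hx

lemma aux_mem_centralizer_sup {S T : Subgroup G} {x : G}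
    (hS : x ∈ Subgroup.centralizer (S : Set G)) (hT : x ∈ Subgroup.centralizer (T : Set G)) :
    x ∈ Subgroup.centralizer ((S ⊔ T : Subgroup G) : Set G) := by
  rw [Subgroup.mem_centralizer_iff] at hS hT ⊢
  intro g hg
  have hle : (S ⊔ T : Subgroup G) ≤ Subgroup.centralizer {x} := sup_le
    (fun s hs => Subgroup.mem_centralizer_singleton_iff.mpr (hS s hs))
    (fun t ht => Subgroup.mem_centralizer_singleton_iff.mpr (hT t ht))
  exact Subgroup.mem_centralizer_singleton_iff.mp (hle hg)

lemma aux_comm_mul_right {x n m : G} (h : ∀ g : G, g * ⁅x, m⁆ = ⁅x, m⁆ * g) :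
    ⁅x, n * m⁆ = ⁅x, n⁆ * ⁅x, m⁆ := by
  have e : ⁅x, n * m⁆ = ⁅x, n⁆ * (n * ⁅x, m⁆ * n⁻¹) := by
    simp only [commutatorElement_def]; group
  rw [e, h n, mul_inv_cancel_right]

lemma aux_comm_mul_left {x y n : G} (h : ∀ g : G, g * ⁅y, n⁆ = ⁅y, n⁆ * g) :
    ⁅x * y, n⁆ = ⁅y, n⁆ * ⁅x, n⁆ := by
  have e : ⁅x * y, n⁆ = x * ⁅y, n⁆ * x⁻¹ * ⁅x, n⁆ := by
    simp only [commutatorElement_def]; group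
  rw [e, h x, mul_inv_cancel_right]

lemma aux_comm_inv_left {m n : G} (h : ∀ g : G, g * ⁅m⁻¹, n⁆ = ⁅m⁻¹, n⁆ * g) :
    ⁅m⁻¹, n⁆ = ⁅m, n⁆⁻¹ := by
  have e := aux_comm_mul_left (x := m) (y := m⁻¹) (n := n) h
  rw [mul_inv_cancel, commutatorElement_one_left] at e
  exact eq_inv_of_mul_eq_one_left e.symm

end Aux

section Duality

lemma aux_card_monoidHom_le (Q C : Type*) [CommGroup Q] [Finite Q] [CommGroup C] [Finite C]
    [IsCyclic C] : Nat.card (Q →* C) ≤ Nat.card Q := by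
  haveI : NeZero (Nat.card C) := ⟨Nat.card_pos.ne'⟩
  haveI : NeZero ((Nat.card C : ℂ)) := ⟨Nat.cast_ne_zero.mpr Nat.card_pos.ne'⟩
  haveI : NeZero ((Monoid.exponent Q : ℂ)) :=
    ⟨Nat.cast_ne_zero.mpr Monoid.exponent_ne_zero_of_finite⟩
  have hcard := HasEnoughRootsOfUnity.natCard_rootsOfUnity ℂ (Nat.card C)
  let e : C ≃* (rootsOfUnity (Nat.card C) ℂ) := mulEquivOfCyclicCardEq hcard.symm
  let f : C →* ℂˣ := (rootsOfUnity (Nat.card C) ℂ).subtype.comp e.toMonoidHom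
  have hf : Function.Injective f :=
    Subtype.coe_injective.comp e.injective
  obtain ⟨e2⟩ := CommGroup.monoidHom_mulEquiv_of_hasEnoughRootsOfUnity Q ℂ
  haveI : Finite (Q →* ℂˣ) := Finite.of_equiv Q e2.toEquiv.symm
  calc Nat.card (Q →* C) ≤ Nat.card (Q →* ℂˣ) :=
        Nat.card_le_card_of_injective (fun φ => f.comp φ)
          (fun φ ψ h => MonoidHom.ext fun q => hf (DFunLike.congr_fun h q))
    _ = Nat.card Q := Nat.card_congr e2.toEquiv

lemma aux_pairing_surjective {M Q C : Type*} [Group M] [CommGroup Q] [Finite Q]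
    [CommGroup C] [Finite C] [IsCyclic C] (β : M →* (Q →* C))
    (hq : ∀ q : Q, (∀ m : M, β m q = 1) → q = 1) :
    Function.Surjective β := by
  haveI : Finite (Q →* C) := Finite.of_injective _ DFunLike.coe_injective
  rw [← MonoidHom.range_eq_top]
  set R := β.range with hR
  let γ : Q →* (↥R →* C) :=
    { toFun := fun q =>
        { toFun := fun r => (r : Q →* C) q
          map_one' := rfl
          map_mul' := fun r s => rfl }
      map_one' := by ext r; exact (r : Q →* C).map_one
      map_mul' := fun a b => by ext r; exact (r : Q →* C).map_mul a b }
  have hγ : Function.Injective γ := by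
    intro a b hab
    have h1 : ∀ m : M, β m (a * b⁻¹) = 1 := fun m => by
      have h2 : (β m) a = (β m) b := DFunLike.congr_fun hab ⟨β m, ⟨m, rfl⟩⟩
      rw [map_mul, map_inv, h2, mul_inv_cancel]
    have := hq _ h1
    rwa [mul_inv_eq_one] at this
  haveI : Finite (↥R →* C) := Finite.of_injective _ DFunLike.coe_injective
  have h1 : Nat.card Q ≤ Nat.card (↥R →* C) := Nat.card_le_card_of_injective γ hγ
  have h2 : Nat.card (↥R →* C) ≤ Nat.card ↥R := aux_card_monoidHom_le ↥R C
  have h3 : Nat.card ↥R ≤ Nat.card (Q →* C) :=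
    Nat.card_le_card_of_injective _ Subtype.coe_injective
  have h4 : Nat.card (Q →* C) ≤ Nat.card Q := aux_card_monoidHom_le Q C
  exact Subgroup.eq_top_of_card_eq R (le_antisymm h3 (by omega))

end Duality

/-- `(H, N)` is a special pair in `G` (with respect to a subgroup `A` of the center of `G`):
`H` and `N` both contain `A`, `H` is a normal subgroup of finite index, every element of `N`
commutes with every element of `H`, `⁅n, g⁆ ∈ A` for all `n ∈ N`, `g ∈ G`, and
`Z_G(H ⊓ N) = NH`. -/
structure IsSpecialPair {G : Type*} [Group G] (A H N : Subgroup G) : Prop where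
  A_le_H : A ≤ H
  A_le_N : A ≤ N
  normal : H.Normal
  finiteIndex : H.FiniteIndex
  commute : ∀ n ∈ N, ∀ h ∈ H, Commute n h
  comm_mem : ∀ n ∈ N, ∀ g : G, ⁅n, g⁆ ∈ A
  centralizer_inf_eq : Subgroup.centralizer ((H ⊓ N : Subgroup G) : Set G) = N ⊔ H

section Key

variable {G : Type*} [Group G]

/-- The key duality step: any element of `N'_{1,2}` centralizing `N'_{1,2}` differs from an
element of `Z(N₁)` by an element of `N₂ ⊓ H₂`. -/
lemma aux_key (A H₁ N₁ H₂ N₂ : Subgroup G)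
    (hA : A ≤ Subgroup.center G) (hcyc : IsCyclic A) (hfin : Finite A)
    (hsp1 : IsSpecialPair A H₁ N₁) (hsp2 : IsSpecialPair A H₂ N₂)
    (hN : N₂ ≤ N₁) {x : G} (hx1 : x ∈ N₁)
    (hxC : x ∈ Subgroup.centralizer (((N₁ ⊓ H₂) ⊔ N₂ : Subgroup G) : Set G)) :
    ∃ m ∈ N₂ ⊓ H₂, x * m⁻¹ ∈ N₁ ⊓ Subgroup.centralizer (N₁ : Set G) := by
  haveI := hfin
  haveI := hcyc
  set Np : Subgroup G := (N₁ ⊓ H₂) ⊔ N₂ with hNpdef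
  have hAN : A ≤ Np := hsp2.A_le_N.trans le_sup_right
  have central : ∀ {c : G}, c ∈ A → ∀ g : G, g * c = c * g :=
    fun hc g => Subgroup.mem_center_iff.mp (hA hc) g
  set S : Subgroup ↥N₁ := Np.subgroupOf N₁ with hSdef
  haveI hSnorm : S.Normal := by
    constructor
    intro n hn g
    rw [Subgroup.mem_subgroupOf] at hn ⊢
    have hcomm : ⁅(g : G), (n : G)⁆ ∈ A := hsp1.comm_mem ↑g g.2 ↑n
    have hval : ((g * n * g⁻¹ : ↥N₁) : G) = ⁅(g : G), (n : G)⁆ * ↑n := by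
      push_cast; simp only [commutatorElement_def]; group
    rw [hval]
    exact mul_mem (hAN hcomm) hn
  letI : CommGroup (↥N₁ ⧸ S) :=
    { (inferInstance : Group (↥N₁ ⧸ S)) with
      mul_comm := fun a b => by
        refine QuotientGroup.induction_on a fun a => ?_
        refine QuotientGroup.induction_on b fun b => ?_
        rw [← QuotientGroup.mk_mul, ← QuotientGroup.mk_mul]
        apply QuotientGroup.eq.mpr
        rw [Subgroup.mem_subgroupOf]
        have hval : (((a * b)⁻¹ * (b * a) : ↥N₁) : G) = ⁅(b : G)⁻¹, (a : G)⁻¹⁆ := by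
          push_cast; simp only [commutatorElement_def]; group
        rw [hval]
        exact hAN (hsp1.comm_mem _ (inv_mem b.2) _) }
  haveI : (H₂.subgroupOf N₁).FiniteIndex := by
    haveI := hsp2.finiteIndex
    infer_instance
  haveI : S.FiniteIndex := by
    refine Subgroup.finiteIndex_of_le (K := S) (H := H₂.subgroupOf N₁) ?_
    intro y hy
    rw [Subgroup.mem_subgroupOf] at hy ⊢
    exact Subgroup.mem_sup_left (Subgroup.mem_inf.mpr ⟨y.2, hy⟩)
  letI : CommGroup ↥A :=
    { (inferInstance : Group ↥A) with
      mul_comm := fun a b => Subtype.ext (Subgroup.mem_center_iff.mp (hA b.2) ↑a) }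
  -- the commutator homomorphism
  let φ : ∀ w : G, w ∈ N₁ → (↥N₁ →* ↥A) := fun w hw =>
    { toFun := fun n => ⟨⁅w, (n : G)⁆, hsp1.comm_mem w hw ↑n⟩
      map_one' := Subtype.ext (by simp)
      map_mul' := fun n m => Subtype.ext (by
        show ⁅w, (n : G) * (m : G)⁆ = ⁅w, (n : G)⁆ * ⁅w, (m : G)⁆
        exact aux_comm_mul_right (central (hsp1.comm_mem w hw ↑m))) }
  have hlift : ∀ (w : G) (hw : w ∈ N₁),
      w ∈ Subgroup.centralizer (Np : Set G) → ∀ n ∈ S, φ w hw n = 1 := by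
    intro w hw hwC n hn
    rw [Subgroup.mem_subgroupOf] at hn
    apply Subtype.ext
    show ⁅w, (n : G)⁆ = 1
    rw [commutatorElement_eq_one_iff_commute]
    exact (Subgroup.mem_centralizer_iff.mp hwC ↑n hn).symm
  have mcent : ∀ m : G, m ∈ N₂ ⊓ H₂ → m ∈ Subgroup.centralizer (Np : Set G) := by
    intro m hm
    apply aux_mem_centralizer_sup
    · rw [Subgroup.mem_centralizer_iff]
      intro g hg
      exact ((hsp2.commute m (Subgroup.mem_inf.mp hm).1 g
        (Subgroup.mem_inf.mp hg).2).symm).eq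
    · rw [Subgroup.mem_centralizer_iff]
      intro g hg
      exact (hsp2.commute g hg m (Subgroup.mem_inf.mp hm).2).eq
  let β : ↥(N₂ ⊓ H₂) →* ((↥N₁ ⧸ S) →* ↥A) :=
    { toFun := fun m => QuotientGroup.lift S (φ ↑m (hN (Subgroup.mem_inf.mp m.2).1))
        (hlift ↑m (hN (Subgroup.mem_inf.mp m.2).1) (mcent ↑m m.2))
      map_one' := by
        refine MonoidHom.ext fun q => ?_
        refine QuotientGroup.induction_on q fun n => ?_
        exact Subtype.ext (by
          show ⁅((1 : ↥(N₂ ⊓ H₂)) : G), (n : G)⁆ = 1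
          simp)
      map_mul' := fun m m' => by
        refine MonoidHom.ext fun q => ?_
        refine QuotientGroup.induction_on q fun n => ?_
        refine Subtype.ext ?_
        show ⁅((m : G)) * ((m' : G)), (n : G)⁆ = ⁅(m : G), (n : G)⁆ * ⁅(m' : G), (n : G)⁆
        rw [aux_comm_mul_left (central (hsp1.comm_mem ↑m'
          (hN (Subgroup.mem_inf.mp m'.2).1) ↑n))]
        exact central (hsp1.comm_mem ↑m (hN (Subgroup.mem_inf.mp m.2).1) ↑n) _ }
  have hq : ∀ q : ↥N₁ ⧸ S, (∀ m : ↥(N₂ ⊓ H₂), β m q = 1) → q = 1 := by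
    intro q
    refine QuotientGroup.induction_on q fun n => ?_
    intro hq1
    have hcent : (↑n : G) ∈ Subgroup.centralizer ((H₂ ⊓ N₂ : Subgroup G) : Set G) := by
      rw [Subgroup.mem_centralizer_iff]
      intro g hg
      have hgm : g ∈ N₂ ⊓ H₂ :=
        Subgroup.mem_inf.mpr ⟨(Subgroup.mem_inf.mp hg).2, (Subgroup.mem_inf.mp hg).1⟩
      have h2 : ⁅g, (n : G)⁆ = 1 := Subtype.ext_iff.mp (hq1 ⟨g, hgm⟩)
      exact (commutatorElement_eq_one_iff_commute.mp h2).eq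
    rw [hsp2.centralizer_inf_eq] at hcent
    obtain ⟨b, hb, h, hh, hdecomp⟩ := aux_mem_sup_of_commute
      (fun s hs t ht => hsp2.commute s hs t ht) hcent
    have hhN₁ : h ∈ N₁ := by
      have hh' : h = b⁻¹ * ↑n := by rw [hdecomp]; group
      rw [hh']
      exact mul_mem (inv_mem (hN hb)) n.2
    have hnNp : (↑n : G) ∈ Np := by
      rw [hdecomp]
      exact mul_mem (Subgroup.mem_sup_right hb) (Subgroup.mem_sup_left (Subgroup.mem_inf.mpr ⟨hhN₁, hh⟩))
    exact (QuotientGroup.eq_one_iff n).mpr (Subgroup.mem_subgroupOf.mpr hnNp)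
  obtain ⟨m, hm⟩ := aux_pairing_surjective β hq
    (QuotientGroup.lift S (φ x hx1) (hlift x hx1 hxC))
  refine ⟨↑m, m.2, ?_⟩
  refine Subgroup.mem_inf.mpr ⟨mul_mem hx1 (inv_mem (hN (Subgroup.mem_inf.mp m.2).1)), ?_⟩
  rw [Subgroup.mem_centralizer_iff]
  intro g hg
  have hmN₁ : (m : G) ∈ N₁ := hN (Subgroup.mem_inf.mp m.2).1
  have hcomm_eq : ⁅(m : G), g⁆ = ⁅x, g⁆ := by
    have h0 : β m ((⟨g, hg⟩ : ↥N₁) : ↥N₁ ⧸ S) =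
        QuotientGroup.lift S (φ x hx1) (hlift x hx1 hxC) ((⟨g, hg⟩ : ↥N₁) : ↥N₁ ⧸ S) := by
      rw [hm]
    exact Subtype.ext_iff.mp h0
  have hAm : ⁅(m : G)⁻¹, g⁆ ∈ A := hsp1.comm_mem _ (inv_mem hmN₁) g
  have e1 : ⁅x * (m : G)⁻¹, g⁆ = ⁅(m : G)⁻¹, g⁆ * ⁅x, g⁆ := aux_comm_mul_left (central hAm)
  have e2 : ⁅(m : G)⁻¹, g⁆ = ⁅(m : G), g⁆⁻¹ := aux_comm_inv_left (central hAm)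
  have hz : ⁅x * (m : G)⁻¹, g⁆ = 1 := by rw [e1, e2, hcomm_eq, inv_mul_cancel]
  exact ((commutatorElement_eq_one_iff_commute.mp hz).symm).eq

end Key

/-- Let `(H₁, N₁)`, `(H₂, N₂)` be special pairs in `G` with `H₁ ≤ H₂`,
`N₂ ≤ N₁`; set `N₁' = N₁ ∩ H₂` and `N'_{1,2} = N₁'·N₂`. Then `N'_{1,2}` is coisotropic in
`N₁`, i.e. `Z_{N₁}(N'_{1,2}) = Z(N'_{1,2})`; moreover
`Z(N'_{1,2}) = Z(N₁')·Z(N₂) = Z(N₁)·(N₂ ∩ H₂)`. -/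
theorem stmt_19 {G : Type*} [Group G] (A H₁ N₁ H₂ N₂ : Subgroup G)
    (hA : A ≤ Subgroup.center G) (hcyc : IsCyclic A) (hfin : Finite A)
    (hsp1 : IsSpecialPair A H₁ N₁) (hsp2 : IsSpecialPair A H₂ N₂)
    (hH : H₁ ≤ H₂) (hN : N₂ ≤ N₁) :
    (N₁ ⊓ Subgroup.centralizer (((N₁ ⊓ H₂) ⊔ N₂ : Subgroup G) : Set G) =
      ((N₁ ⊓ H₂) ⊔ N₂) ⊓
        Subgroup.centralizer (((N₁ ⊓ H₂) ⊔ N₂ : Subgroup G) : Set G)) ∧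
    (((N₁ ⊓ H₂) ⊔ N₂) ⊓
        Subgroup.centralizer (((N₁ ⊓ H₂) ⊔ N₂ : Subgroup G) : Set G) =
      ((N₁ ⊓ H₂) ⊓ Subgroup.centralizer ((N₁ ⊓ H₂ : Subgroup G) : Set G)) ⊔
        (N₂ ⊓ Subgroup.centralizer (N₂ : Set G))) ∧
    (((N₁ ⊓ H₂) ⊔ N₂) ⊓
        Subgroup.centralizer (((N₁ ⊓ H₂) ⊔ N₂ : Subgroup G) : Set G) =
      (N₁ ⊓ Subgroup.centralizer (N₁ : Set G)) ⊔ (N₂ ⊓ H₂)) := by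
  set Np : Subgroup G := (N₁ ⊓ H₂) ⊔ N₂ with hNpdef
  have hNpN₁ : Np ≤ N₁ := sup_le inf_le_left hN
  -- cross commuting of N₁ ⊓ H₂ and N₂
  have hcross : ∀ s ∈ N₁ ⊓ H₂, ∀ t ∈ N₂, Commute s t :=
    fun s hs t ht => (hsp2.commute t ht s hs.2).symm
  -- membership lemma: an element of N₁ centralizing H₂ ⊓ N₂ lies in Np
  have hF3 : ∀ x ∈ N₁, x ∈ Subgroup.centralizer ((H₂ ⊓ N₂ : Subgroup G) : Set G) → x ∈ Np := by
    intro x hx hxc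
    rw [hsp2.centralizer_inf_eq] at hxc
    obtain ⟨b, hb, h, hh, hdecomp⟩ := aux_mem_sup_of_commute
      (fun s hs t ht => hsp2.commute s hs t ht) hxc
    have hhN₁ : h ∈ N₁ := by
      have hh' : h = b⁻¹ * x := by rw [hdecomp]; group
      rw [hh']
      exact mul_mem (inv_mem (hN hb)) hx
    rw [hdecomp]
    exact mul_mem (Subgroup.mem_sup_right hb) (Subgroup.mem_sup_left (Subgroup.mem_inf.mpr ⟨hhN₁, hh⟩))
  -- Part 1
  have part1 : N₁ ⊓ Subgroup.centralizer (Np : Set G) =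
      Np ⊓ Subgroup.centralizer (Np : Set G) := by
    apply le_antisymm
    · rintro x ⟨hx1, hx2⟩
      refine ⟨?_, hx2⟩
      refine hF3 x hx1 ?_
      refine Subgroup.centralizer_le ?_ hx2
      intro y hy
      exact Subgroup.mem_sup_right (Subgroup.mem_inf.mp hy).2
    · exact inf_le_inf_right _ hNpN₁
  -- Part 2
  have part2 : Np ⊓ Subgroup.centralizer (Np : Set G) =
      ((N₁ ⊓ H₂) ⊓ Subgroup.centralizer ((N₁ ⊓ H₂ : Subgroup G) : Set G)) ⊔
        (N₂ ⊓ Subgroup.centralizer (N₂ : Set G)) := by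
    apply le_antisymm
    · rintro x ⟨hx1, hx2⟩
      obtain ⟨a, ha, b, hb, hdecomp⟩ := aux_mem_sup_of_commute hcross hx1
      -- b centralizes N₂ pieces
      have hxN₂ : x ∈ Subgroup.centralizer (N₂ : Set G) :=
        Subgroup.centralizer_le (fun y hy => Subgroup.mem_sup_right hy) hx2
      have haN₂cent : (a : G) ∈ Subgroup.centralizer (N₂ : Set G) := by
        rw [Subgroup.mem_centralizer_iff]
        intro y hy
        exact ((hcross a ha y hy).symm).eq
      have haC : a ∈ (N₁ ⊓ H₂) ⊓ Subgroup.centralizer ((N₁ ⊓ H₂ : Subgroup G) : Set G) := by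
        refine Subgroup.mem_inf.mpr ⟨ha, ?_⟩
        rw [Subgroup.mem_centralizer_iff]
        intro y hy
        -- show y * a = a * y
        have hxy : y * x = x * y := Subgroup.mem_centralizer_iff.mp hx2 y
          (Subgroup.mem_sup_left hy)
        have hby : b * y = y * b := (hcross y hy b hb).symm.eq
        -- from x = a * b : y * a * b = a * b * y and b y = y b
        have h1 : y * (a * b) = a * b * y := by rw [← hdecomp]; exact hxy
        have h2 : y * a * b = a * (y * b) := by
          calc y * a * b = y * (a * b) := by rw [mul_assoc]
            _ = a * b * y := h1
            _ = a * (b * y) := by rw [mul_assoc]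
            _ = a * (y * b) := by rw [hby]
        have h3 : y * a = a * y := by
          have := mul_right_cancel (a := y * a) (b := b) (c := a * y)
          apply this
          rw [h2, mul_assoc]
        exact h3
      have hbC : b ∈ N₂ ⊓ Subgroup.centralizer (N₂ : Set G) := by
        refine Subgroup.mem_inf.mpr ⟨hb, ?_⟩
        have hbeq : b = (a : G)⁻¹ * x := by rw [hdecomp]; group
        rw [hbeq]
        exact mul_mem (inv_mem haN₂cent) hxN₂
      rw [hdecomp]
      exact mul_mem (Subgroup.mem_sup_left haC) (Subgroup.mem_sup_right hbC)
    · apply sup_le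
      · rintro a ⟨ha, hac⟩
        refine Subgroup.mem_inf.mpr ⟨Subgroup.mem_sup_left ha, ?_⟩
        apply aux_mem_centralizer_sup
        · exact hac
        · rw [Subgroup.mem_centralizer_iff]
          intro y hy
          exact (hsp2.commute y hy a ha.2).eq
      · rintro b ⟨hb, hbc⟩
        refine Subgroup.mem_inf.mpr ⟨Subgroup.mem_sup_right hb, ?_⟩
        apply aux_mem_centralizer_sup
        · rw [Subgroup.mem_centralizer_iff]
          intro y hy
          exact ((hsp2.commute b hb y hy.2).symm).eq
        · exact hbc
  -- Part 3
  have part3 : Np ⊓ Subgroup.centralizer (Np : Set G) =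
      (N₁ ⊓ Subgroup.centralizer (N₁ : Set G)) ⊔ (N₂ ⊓ H₂) := by
    apply le_antisymm
    · rintro x ⟨hx1, hx2⟩
      obtain ⟨m, hm, hzmem⟩ := aux_key A H₁ N₁ H₂ N₂ hA hcyc hfin hsp1 hsp2 hN
        (hNpN₁ hx1) hx2
      have hxeq : x = (x * m⁻¹) * m := by group
      rw [hxeq]
      exact mul_mem (Subgroup.mem_sup_left hzmem) (Subgroup.mem_sup_right hm)
    · apply sup_le
      · rintro z ⟨hz1, hz2⟩
        refine Subgroup.mem_inf.mpr ⟨?_, ?_⟩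
        · refine hF3 z hz1 ?_
          refine Subgroup.centralizer_le ?_ hz2
          intro y hy
          exact hN (Subgroup.mem_inf.mp hy).2
        · exact Subgroup.centralizer_le (fun y hy => hNpN₁ hy) hz2
      · rintro m hm
        refine Subgroup.mem_inf.mpr ⟨Subgroup.mem_sup_right (Subgroup.mem_inf.mp hm).1, ?_⟩
        apply aux_mem_centralizer_sup
        · rw [Subgroup.mem_centralizer_iff]
          intro y hy
          exact ((hsp2.commute m (Subgroup.mem_inf.mp hm).1 y
            (Subgroup.mem_inf.mp hy).2).symm).eq
        · rw [Subgroup.mem_centralizer_iff]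
          intro y hy
          exact (hsp2.commute y hy m (Subgroup.mem_inf.mp hm).2).eq
  exact ⟨part1, part2, part3⟩
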